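/- For fixed H ∈ ℝ and fixed m ∈ (0,∞], the function ρ ↦ J_{H,ρ,m}(t) is pointwise monotone nonincreasing in ρ ∈ ℝ: if ρ₁ ≥ ρ₂ then J_{H,ρ₁,m}(t) ≤ J_{H,ρ₂,m}(t) for all t ∈ ℝ. -/

import Mathlib

open scoped Classical

noncomputable def sdel (δ t : ℝ) : ℝ :=
  if 0 < δ then Real.sin (Real.sqrt δ * t) / Real.sqrt δ
  else if δ = 0 then t
  else Real.sinh (Real.sqrt (-δ) * t) / Real.sqrt (-δ)

noncomputable def cdel (δ t : ℝ) : ℝ :=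
  if 0 < δ then Real.cos (Real.sqrt δ * t)
  else if δ = 0 then 1
  else Real.cosh (Real.sqrt (-δ) * t)

/-- Truncation `f₊` of `f` between its first nonpositive and first positive roots. -/
noncomputable def truncPos (f : ℝ → ℝ) (t : ℝ) : ℝ :=
  if ∃ s ∈ Set.Ioo (min t 0) (max t 0), f s = 0 then 0 else f t

/-- The model Jacobian `J_{H,ρ,m}` for `m ∈ (0,∞)`. -/
noncomputable def Jfun (H ρ m : ℝ) (t : ℝ) : ℝ :=
  (truncPos (fun s => cdel (ρ / m) s + (H / m) * sdel (ρ / m) s) t) ^ m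

/-!
With `δ = ρ / m` and `h = H / m`, the function `g = c_δ + h s_δ` solves `g'' = -δ g` with
`g 0 = 1`, `g' 0 = h`. For `δ₂ ≤ δ₁` the Wronskian `g₂' g₁ - g₁' g₂` of the two solutions vanishes
at `0` and has derivative `(δ₁ - δ₂) g₁ g₂`, so while both are positive `g₂ / g₁` increases from
`1` (Sturm comparison). Hence `g₂` has no zero before the first zero of `g₁`, and `g₁ ≤ g₂` up
to it, which gives `(g₁)₊ ≤ (g₂)₊` for `t ≥ 0`. Negative `t` reduce to this since `t ↦ g (-t)`
is the solution with `h` replaced by `-h`. The case `m = ∞` is monotonicity of `exp`.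
-/

open Set

lemma sdel_zero (δ : ℝ) : sdel δ 0 = 0 := by
  unfold sdel; split_ifs <;> simp

lemma cdel_zero (δ : ℝ) : cdel δ 0 = 1 := by
  unfold cdel; split_ifs <;> simp

lemma sdel_neg (δ t : ℝ) : sdel δ (-t) = -sdel δ t := by
  unfold sdel; split_ifs <;> simp [neg_div]

lemma cdel_neg (δ t : ℝ) : cdel δ (-t) = cdel δ t := by
  unfold cdel; split_ifs <;> simp

lemma hasDerivAt_sdel (δ t : ℝ) : HasDerivAt (sdel δ) (cdel δ t) t := by
  rcases lt_trichotomy δ 0 with hδ | rfl | hδ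
  · have hr : √(-δ) ≠ 0 := (Real.sqrt_pos.2 (neg_pos.2 hδ)).ne'
    show HasDerivAt (fun s => sdel δ s) _ t
    simp only [sdel, cdel, if_neg hδ.not_gt, if_neg hδ.ne]
    refine ((((hasDerivAt_id' t).const_mul √(-δ)).sinh).div_const √(-δ)).congr_deriv ?_
    field_simp
  · show HasDerivAt (fun s => sdel 0 s) _ t
    simpa [sdel, cdel] using hasDerivAt_id' t
  · have hr : √δ ≠ 0 := (Real.sqrt_pos.2 hδ).ne'
    show HasDerivAt (fun s => sdel δ s) _ t
    simp only [sdel, cdel, if_pos hδ]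
    refine ((((hasDerivAt_id' t).const_mul √δ).sin).div_const √δ).congr_deriv ?_
    field_simp

lemma hasDerivAt_cdel (δ t : ℝ) : HasDerivAt (cdel δ) (-(δ * sdel δ t)) t := by
  rcases lt_trichotomy δ 0 with hδ | rfl | hδ
  · have hr : √(-δ) ≠ 0 := (Real.sqrt_pos.2 (neg_pos.2 hδ)).ne'
    show HasDerivAt (fun s => cdel δ s) _ t
    simp only [sdel, cdel, if_neg hδ.not_gt, if_neg hδ.ne]
    refine (((hasDerivAt_id' t).const_mul √(-δ)).cosh).congr_deriv ?_
    field_simp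
    rw [Real.sq_sqrt (neg_nonneg.2 hδ.le)]
    ring
  · show HasDerivAt (fun s => cdel 0 s) _ t
    simpa [sdel, cdel] using hasDerivAt_const t (1 : ℝ)
  · have hr : √δ ≠ 0 := (Real.sqrt_pos.2 hδ).ne'
    show HasDerivAt (fun s => cdel δ s) _ t
    simp only [sdel, cdel, if_pos hδ]
    refine (((hasDerivAt_id' t).const_mul √δ).cos).congr_deriv ?_
    field_simp
    rw [Real.sq_sqrt hδ.le]
    ring

def SolvesJacobi (δ : ℝ) (g g' : ℝ → ℝ) : Prop :=
  ∀ s, HasDerivAt g (g' s) s ∧ HasDerivAt g' (-(δ * g s)) s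

noncomputable def csdel (δ h s : ℝ) : ℝ := cdel δ s + h * sdel δ s

lemma csdel_zero (δ h : ℝ) : csdel δ h 0 = 1 := by
  simp [csdel, sdel_zero, cdel_zero]

lemma csdel_neg (δ h s : ℝ) : csdel δ h (-s) = csdel δ (-h) s := by
  simp [csdel, sdel_neg, cdel_neg]

lemma solvesJacobi_csdel (δ h : ℝ) :
    SolvesJacobi δ (csdel δ h) (fun s => h * cdel δ s - δ * sdel δ s) := fun s =>
  ⟨((hasDerivAt_cdel δ s).add ((hasDerivAt_sdel δ s).const_mul h)).congr_deriv (by ring),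
    (((hasDerivAt_cdel δ s).const_mul h).sub ((hasDerivAt_sdel δ s).const_mul δ)).congr_deriv
      (by simp only [csdel]; ring)⟩

lemma SolvesJacobi.continuous {δ : ℝ} {g g' : ℝ → ℝ} (hg : SolvesJacobi δ g g') : Continuous g :=
  continuous_iff_continuousAt.2 fun s => (hg s).1.continuousAt

lemma monotoneOn_of_hasDerivAt_nonneg {D : Set ℝ} (hD : Convex ℝ D) {f f' : ℝ → ℝ}
    (hf : ∀ x ∈ D, HasDerivAt f (f' x) x) (hf'₀ : ∀ x ∈ D, 0 ≤ f' x) : MonotoneOn f D :=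
  monotoneOn_of_hasDerivWithinAt_nonneg hD
    (fun x hx => (hf x hx).continuousAt.continuousWithinAt)
    (fun x hx => (hf x (interior_subset hx)).hasDerivWithinAt)
    fun x hx => hf'₀ x (interior_subset hx)

lemma le_of_forall_Ico_le {f g : ℝ → ℝ} (hf : Continuous f) (hg : Continuous g) {a b : ℝ}
    (hab : a < b) (h : ∀ s ∈ Ico a b, f s ≤ g s) : f b ≤ g b :=
  le_on_closure h hf.continuousOn hg.continuousOn <| by
    rw [closure_Ico hab.ne]; exact right_mem_Icc.2 hab.le

lemma truncPos_of_nonneg (f : ℝ → ℝ) {t : ℝ} (ht : 0 ≤ t) :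
    truncPos f t = if ∃ s ∈ Ioo 0 t, f s = 0 then 0 else f t := by
  simp [truncPos, ht]

lemma truncPos_comp_neg (f : ℝ → ℝ) (t : ℝ) :
    truncPos (fun s => f (-s)) (-t) = truncPos f t := by
  have hIoo (s : ℝ) : s ∈ Ioo (min (-t) 0) (max (-t) 0) ↔ -s ∈ Ioo (min t 0) (max t 0) := by
    rcases le_total 0 t with ht | ht <;> simp only [ht, mem_Ioo, min_eq_left, min_eq_right,
      max_eq_left, max_eq_right, neg_nonneg, neg_nonpos] <;> constructor <;> intro h <;>
      constructor <;> linarith [h.1, h.2]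
  simp only [truncPos, neg_neg]
  congr 1
  exact propext ⟨fun ⟨s, hs, hs₀⟩ => ⟨-s, (hIoo s).1 hs, hs₀⟩,
    fun ⟨s, hs, hs₀⟩ => ⟨-s, (hIoo (-s)).2 (by rwa [neg_neg]), by rwa [neg_neg]⟩⟩

lemma forall_pos_of_not_exists_zero {f : ℝ → ℝ} (hf : Continuous f) (h0 : 0 < f 0) {t : ℝ}
    (hz : ¬ ∃ s ∈ Ioo 0 t, f s = 0) : ∀ s ∈ Ico 0 t, 0 < f s := by
  intro s hs
  by_contra! hs₀
  obtain ⟨r, hr, hr₀⟩ := intermediate_value_Ioc' hs.1 hf.continuousOn ⟨hs₀, h0⟩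
  exact hz ⟨r, ⟨hr.1, hr.2.trans_lt hs.2⟩, hr₀⟩

lemma truncPos_nonneg {f : ℝ → ℝ} (hf : Continuous f) (h0 : 0 < f 0) (t : ℝ) :
    0 ≤ truncPos f t := by
  wlog ht : 0 ≤ t generalizing f t
  · rw [← truncPos_comp_neg]
    exact this (hf.comp continuous_neg) (by simpa using h0) (-t) (by linarith)
  rw [truncPos_of_nonneg f ht]
  split_ifs with hz
  · exact le_rfl
  by_contra! ht₀
  obtain ⟨r, hr, hr₀⟩ := intermediate_value_Ioo' ht hf.continuousOn ⟨ht₀, h0⟩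
  exact hz ⟨r, hr, hr₀⟩

section Sturm

variable {δ₁ δ₂ t z : ℝ} {g₁ g₁' g₂ g₂' : ℝ → ℝ}

lemma SolvesJacobi.le_of_pos_of_pos (h₁ : SolvesJacobi δ₁ g₁ g₁') (h₂ : SolvesJacobi δ₂ g₂ g₂')
    (hδ : δ₂ ≤ δ₁) (h0 : g₁ 0 = g₂ 0) (h0' : g₁' 0 = g₂' 0)
    (hpos₁ : ∀ s ∈ Ico 0 z, 0 < g₁ s) (hpos₂ : ∀ s ∈ Ico 0 z, 0 < g₂ s) :
    ∀ s ∈ Ico 0 z, g₁ s ≤ g₂ s := by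
  set W := fun s => g₂' s * g₁ s - g₁' s * g₂ s
  have hW_mono : MonotoneOn W (Ico 0 z) :=
    monotoneOn_of_hasDerivAt_nonneg (convex_Ico 0 z)
      (fun s _ => (((h₂ s).2.mul (h₁ s).1).sub ((h₁ s).2.mul (h₂ s).1)).congr_deriv
        (by ring : _ = (δ₁ - δ₂) * (g₁ s * g₂ s)))
      fun s hs => mul_nonneg (sub_nonneg.2 hδ) (mul_pos (hpos₁ s hs) (hpos₂ s hs)).le
  intro s hs
  have h0z : (0 : ℝ) ∈ Ico 0 z := ⟨le_rfl, hs.1.trans_lt hs.2⟩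
  have hW_nonneg : ∀ r ∈ Ico 0 z, 0 ≤ W r := fun r hr => by
    simpa [W, h0, h0', mul_comm] using hW_mono h0z hr hr.1
  have hq_mono : MonotoneOn (fun s => g₂ s / g₁ s) (Ico 0 z) :=
    monotoneOn_of_hasDerivAt_nonneg (convex_Ico 0 z)
      (fun r hr => ((h₂ r).1.div (h₁ r).1 (hpos₁ r hr).ne').congr_deriv
        (by ring : _ = W r / g₁ r ^ 2))
      fun r hr => div_nonneg (hW_nonneg r hr) (sq_nonneg _)
  have := hq_mono h0z hs hs.1
  simp only [← h0, div_self (hpos₁ 0 h0z).ne'] at this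
  exact (one_le_div (hpos₁ s hs)).1 this

lemma SolvesJacobi.pos_of_pos (h₁ : SolvesJacobi δ₁ g₁ g₁') (h₂ : SolvesJacobi δ₂ g₂ g₂')
    (hδ : δ₂ ≤ δ₁) (h0 : g₁ 0 = g₂ 0) (h0' : g₁' 0 = g₂' 0)
    (hpos₁ : ∀ s ∈ Ico 0 z, 0 < g₁ s) : ∀ s ∈ Ico 0 z, 0 < g₂ s := by
  by_contra! ⟨r, hr, hr₂⟩
  -- `z₀` is the first zero of `g₂`; comparison on `[0, z₀)` would give `g₁ z₀ ≤ g₂ z₀ ≤ 0`.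
  obtain ⟨z₀, ⟨hz₀, hz₀₂⟩, hleast⟩ := (isCompact_Icc.inter_right
    (isClosed_le h₂.continuous continuous_const)).exists_isLeast ⟨r, ⟨hr.1, le_rfl⟩, hr₂⟩
  have hsub : Ico 0 z₀ ⊆ Ico 0 z := Ico_subset_Ico_right (hz₀.2.trans hr.2.le)
  have hpos₂ : ∀ s ∈ Ico 0 z₀, 0 < g₂ s := fun s hs =>
    lt_of_not_ge fun hs₂ => (hleast ⟨⟨hs.1, hs.2.le.trans hz₀.2⟩, hs₂⟩).not_gt hs.2
  have hz₀_pos : 0 < z₀ := by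
    refine hz₀.1.lt_of_ne fun h => ?_
    rw [mem_ofPred_eq, ← h, ← h0] at hz₀₂
    exact (hpos₁ 0 ⟨le_rfl, hr.1.trans_lt hr.2⟩).not_ge hz₀₂
  have hle := le_of_forall_Ico_le h₁.continuous h₂.continuous hz₀_pos
    (h₁.le_of_pos_of_pos h₂ hδ h0 h0' (fun s hs => hpos₁ s (hsub hs)) hpos₂)
  exact (hpos₁ z₀ ⟨hz₀.1, hz₀.2.trans_lt hr.2⟩).not_ge (hle.trans hz₀₂)

lemma SolvesJacobi.truncPos_le (h₁ : SolvesJacobi δ₁ g₁ g₁') (h₂ : SolvesJacobi δ₂ g₂ g₂')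
    (hδ : δ₂ ≤ δ₁) (h0 : g₁ 0 = g₂ 0) (h0' : g₁' 0 = g₂' 0)
    (hpos : 0 < g₁ 0) (ht : 0 ≤ t) : truncPos g₁ t ≤ truncPos g₂ t := by
  by_cases hz₁ : ∃ s ∈ Ioo 0 t, g₁ s = 0
  · rw [truncPos_of_nonneg g₁ ht, if_pos hz₁]
    exact truncPos_nonneg h₂.continuous (h0 ▸ hpos) t
  have hpos₁ := forall_pos_of_not_exists_zero h₁.continuous hpos hz₁
  have hpos₂ := h₁.pos_of_pos h₂ hδ h0 h0' hpos₁
  have hz₂ : ¬ ∃ s ∈ Ioo 0 t, g₂ s = 0 := fun ⟨s, hs, hs₀⟩ =>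
    (hpos₂ s (Ioo_subset_Ico_self hs)).ne' hs₀
  rw [truncPos_of_nonneg g₁ ht, truncPos_of_nonneg g₂ ht, if_neg hz₁, if_neg hz₂]
  rcases ht.eq_or_lt with rfl | ht
  · exact h0.le
  · exact le_of_forall_Ico_le h₁.continuous h₂.continuous ht
      (h₁.le_of_pos_of_pos h₂ hδ h0 h0' hpos₁ hpos₂)

end Sturm

lemma truncPos_csdel_le_of_le {δ₁ δ₂ : ℝ} (hδ : δ₂ ≤ δ₁) (h t : ℝ) :
    truncPos (csdel δ₁ h) t ≤ truncPos (csdel δ₂ h) t := by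
  wlog ht : 0 ≤ t generalizing h t
  · have hreflect (δ : ℝ) : truncPos (csdel δ h) t = truncPos (csdel δ (-h)) (-t) := by
      rw [← truncPos_comp_neg (csdel δ (-h))]
      simp only [csdel_neg, neg_neg]
    rw [hreflect, hreflect]
    exact this (-h) (-t) (by linarith)
  exact (solvesJacobi_csdel δ₁ h).truncPos_le (solvesJacobi_csdel δ₂ h) hδ
    (by simp only [csdel_zero]) (by simp [sdel_zero, cdel_zero]) (by simp [csdel_zero]) ht

/-- `ρ ↦ J_{H,ρ,m}` is pointwise nonincreasing in `ρ`, for `m ∈ (0,∞)` as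
well as for `m = ∞` (where `J_{H,ρ,∞}(t) = exp(Ht − (ρ/2)t²)`). -/
theorem stmt3 (H m ρ₁ ρ₂ : ℝ) (hm : 0 < m) (hρ : ρ₂ ≤ ρ₁) (t : ℝ) :
    Jfun H ρ₁ m t ≤ Jfun H ρ₂ m t ∧
    Real.exp (H * t - ρ₁ / 2 * t ^ 2) ≤ Real.exp (H * t - ρ₂ / 2 * t ^ 2) := by
  refine ⟨?_, by gcongr⟩
  show truncPos (csdel (ρ₁ / m) (H / m)) t ^ m ≤ truncPos (csdel (ρ₂ / m) (H / m)) t ^ m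
  have hnonneg := truncPos_nonneg (solvesJacobi_csdel (ρ₁ / m) (H / m)).continuous
    (by simp [csdel_zero]) t
  exact Real.rpow_le_rpow hnonneg (truncPos_csdel_le_of_le (by gcongr) _ t) hm.le
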